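/- arXiv:2501.16522 — 2 statements merged into one kernel-verified Lean document; each statement's English description precedes it below -/
import Mathlib

section
/- Define h(x,y) = x^{-N}, f₁(x,y) = r₀x^N/(1+Ky) - ax² - pxy - dx, f₂(x,y) = qxy - my for x, y > 0 with 1 < N < 2 and all parameters positive. Then ∂/∂x(h·f₁) + ∂/∂y(h·f₂) ≥ [q - a(2-N)]x^{1-N} + [d(N-1) - m]x^{-N} for all x, y > 0. -/
/-!
Multiplying by the Dulac weight `x^(-N)` turns `f₁` into
`r₀/(1+Ky) - a x^(2-N) - (p y + d) x^(1-N)`, whose `x`-derivative is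
`-a(2-N) x^(1-N) + (p y + d)(N-1) x^(-N)`, while `∂/∂y (x^(-N) f₂) = q x^(1-N) - m x^(-N)`.
The divergence therefore exceeds the claimed bound by exactly `p (N-1) y x^(-N) ≥ 0`.
-/

open Real Filter

namespace Dulac

variable {x : ℝ}

lemma rpow_neg_mul_rpow (hx : 0 < x) (N s : ℝ) : x ^ (-N) * x ^ s = x ^ (s - N) := by
  rw [← rpow_add hx, neg_add_eq_sub]

lemma rpow_neg_mul_self (hx : 0 < x) (N : ℝ) : x ^ (-N) * x = x ^ (1 - N) := by
  simpa using rpow_neg_mul_rpow hx N 1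

lemma rpow_neg_mul_f₁ (hx : 0 < x) (r₀ c a p d y N : ℝ) :
    x ^ (-N) * (r₀ * x ^ N / c - a * x ^ 2 - p * x * y - d * x)
      = r₀ / c - a * x ^ (2 - N) - (p * y + d) * x ^ (1 - N) := by
  have hN : x ^ (-N) * x ^ N = 1 := by rw [rpow_neg_mul_rpow hx, sub_self, rpow_zero]
  have h2 : x ^ (-N) * x ^ 2 = x ^ (2 - N) := by
    rw [← rpow_neg_mul_rpow hx, ← rpow_natCast]; norm_num
  have h1 := rpow_neg_mul_self hx N
  linear_combination (r₀ / c) * hN - a * h2 - (p * y + d) * h1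

lemma hasDerivAt_rpow_neg_mul_f₁ (hx : 0 < x) (r₀ c a p d y N : ℝ) :
    HasDerivAt (fun x' : ℝ => x' ^ (-N) * (r₀ * x' ^ N / c - a * x' ^ 2 - p * x' * y - d * x'))
      (-(a * (2 - N)) * x ^ (1 - N) + (p * y + d) * (N - 1) * x ^ (-N)) x := by
  have hsimp : HasDerivAt (fun x' : ℝ => r₀ / c - a * x' ^ (2 - N) - (p * y + d) * x' ^ (1 - N))
      (0 - a * ((2 - N) * x ^ (2 - N - 1)) - (p * y + d) * ((1 - N) * x ^ (1 - N - 1))) x :=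
    ((hasDerivAt_const x _).sub ((hasDerivAt_rpow_const (Or.inl hx.ne')).const_mul a)).sub
      ((hasDerivAt_rpow_const (Or.inl hx.ne')).const_mul _)
  have hfun : (fun x' : ℝ => x' ^ (-N) * (r₀ * x' ^ N / c - a * x' ^ 2 - p * x' * y - d * x'))
      =ᶠ[nhds x] fun x' => r₀ / c - a * x' ^ (2 - N) - (p * y + d) * x' ^ (1 - N) := by
    filter_upwards [eventually_gt_nhds hx] with x' hx'
    exact rpow_neg_mul_f₁ hx' r₀ c a p d y N
  refine (hsimp.congr_of_eventuallyEq hfun).congr_deriv ?_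
  rw [show 2 - N - 1 = 1 - N by ring, show 1 - N - 1 = -N by ring]
  ring

lemma hasDerivAt_rpow_neg_mul_f₂ (hx : 0 < x) (q m N y : ℝ) :
    HasDerivAt (fun y' : ℝ => x ^ (-N) * (q * x * y' - m * y'))
      (q * x ^ (1 - N) - m * x ^ (-N)) y := by
  refine ((((hasDerivAt_id' y).const_mul (q * x)).sub
    ((hasDerivAt_id' y).const_mul m)).const_mul (x ^ (-N))).congr_deriv ?_
  rw [← rpow_neg_mul_self hx]
  ring

end Dulac

open Dulac in
theorem stmt_13_general (r₀ K a d p q m N : ℝ) (hp : 0 < p) (hN1 : 1 < N) :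
    ∀ x y : ℝ, 0 < x → 0 < y →
      deriv (fun x' : ℝ => x' ^ (-N) *
          (r₀ * x' ^ N / (1 + K * y) - a * x' ^ 2 - p * x' * y - d * x')) x
        + deriv (fun y' : ℝ => x ^ (-N) * (q * x * y' - m * y')) y
      ≥ (q - a * (2 - N)) * x ^ (1 - N) + (d * (N - 1) - m) * x ^ (-N) := by
  intro x y hx hy
  rw [(hasDerivAt_rpow_neg_mul_f₁ hx r₀ _ a p d y N).deriv,
    (hasDerivAt_rpow_neg_mul_f₂ hx q m N y).deriv]
  have hexcess : 0 ≤ p * y * (N - 1) * x ^ (-N) := by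
    have := sub_pos.mpr hN1
    positivity
  linarith

theorem stmt_13 (r₀ K a d p q m N : ℝ) (hr : 0 < r₀) (hK : 0 < K)
    (ha : 0 < a) (hd : 0 < d) (hp : 0 < p) (hq : 0 < q) (hm : 0 < m)
    (hN1 : 1 < N) (hN2 : N < 2) :
    ∀ x y : ℝ, 0 < x → 0 < y →
      deriv (fun x' : ℝ => x' ^ (-N) *
          (r₀ * x' ^ N / (1 + K * y) - a * x' ^ 2 - p * x' * y - d * x')) x
        + deriv (fun y' : ℝ => x ^ (-N) * (q * x * y' - m * y')) y
      ≥ (q - a * (2 - N)) * x ^ (1 - N) + (d * (N - 1) - m) * x ^ (-N) :=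
  stmt_13_general r₀ K a d p q m N hp hN1
end

section
/- Let J be the 2×2 matrix with entries J₁₁ = Na₀ - (1+v̄)(2a₁ + a₂ + a₃v̄), J₁₂ = -a₃ - (a₁+a₂) - 2a₃v̄, J₂₁ = v̄(1+v̄), J₂₂ = 0, where a₀, a₁, a₂, a₃, v̄ > 0 and a₀ = (a₁+a₂+a₃v̄)(1+v̄). Then trace(J) = 0 if and only if N = 1 + a₁/(a₁ + a₂ + a₃v̄), and det(J) = (a₃ + a₁ + a₂ + 2a₃v̄)·v̄(1+v̄) > 0; consequently at N = N_H := 1 + a₁/(a₁+a₂+a₃v̄) both eigenvalues of J are purely imaginary and nonzero. -/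
/-!
Substituting `a₀ = s (1 + v̄)` with `s = a₁ + a₂ + a₃ v̄` factors the trace as
`(1 + v̄) (s (N - 1) - a₁)`, so it vanishes exactly at `N_H = 1 + a₁ / s`. There the
characteristic polynomial of `J` is `μ ^ 2 + det J`. Since `det J > 0`, every eigenvalue satisfies `μ ^ 2 = -det J < 0`, which forces
`μ` to be a nonzero purely imaginary number.
-/

theorem Complex.re_eq_zero_of_sq_eq_neg_ofReal {μ : ℂ} {d : ℝ} (hd : 0 ≤ d)
    (h : μ ^ 2 = -(d : ℂ)) : μ.re = 0 := by
  have hre : μ.re * μ.re - μ.im * μ.im = -d := by simpa [sq] using congrArg Complex.re h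
  have him : μ.re * μ.im + μ.im * μ.re = 0 := by simpa [sq] using congrArg Complex.im h
  rcases mul_eq_zero.mp (by linarith : μ.re * μ.im = 0) with hre0 | him0
  · exact hre0
  · rw [him0] at hre
    nlinarith

namespace Matrix

theorem sq_eq_neg_det_of_mem_spectrum_of_trace_eq_zero {K : Type*} [Field K]
    {A : Matrix (Fin 2) (Fin 2) K} (htr : A.trace = 0) {μ : K} (hμ : μ ∈ spectrum K A) :
    μ ^ 2 = -A.det := by
  rw [mem_spectrum_iff_isRoot_charpoly, charpoly_fin_two, htr] at hμ
  simpa [eq_neg_iff_add_eq_zero] using hμ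

theorem re_eq_zero_and_ne_zero_of_mem_spectrum_map_ofReal {A : Matrix (Fin 2) (Fin 2) ℝ}
    (htr : A.trace = 0) (hdet : 0 < A.det) {μ : ℂ}
    (hμ : μ ∈ spectrum ℂ (A.map (Complex.ofReal ·))) : μ.re = 0 ∧ μ ≠ 0 := by
  have htrC : (A.map (Complex.ofReal ·)).trace = 0 :=
    (AddMonoidHom.map_trace Complex.ofRealHom A).symm.trans (by rw [htr, map_zero])
  have hsq : μ ^ 2 = -(A.det : ℂ) := by
    rw [sq_eq_neg_det_of_mem_spectrum_of_trace_eq_zero htrC hμ]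
    exact congrArg Neg.neg (Complex.ofRealHom.map_det A).symm
  refine ⟨Complex.re_eq_zero_of_sq_eq_neg_ofReal hdet.le hsq, fun hμ0 => ?_⟩
  rw [hμ0, zero_pow two_ne_zero, zero_eq_neg, Complex.ofReal_eq_zero] at hsq
  exact hdet.ne' hsq

end Matrix

theorem stmt_16_general (a₀ a₁ a₂ a₃ vbar N : ℝ) (h₁ : 0 < a₁)
    (h₂ : 0 < a₂) (h₃ : 0 < a₃) (hvbar : 0 < vbar)
    (heq : a₀ = (a₁ + a₂ + a₃ * vbar) * (1 + vbar)) :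
    let J : Matrix (Fin 2) (Fin 2) ℝ :=
      !![N * a₀ - (1 + vbar) * (2 * a₁ + a₂ + a₃ * vbar),
         -a₃ - (a₁ + a₂) - 2 * a₃ * vbar;
         vbar * (1 + vbar), 0]
    (J.trace = 0 ↔ N = 1 + a₁ / (a₁ + a₂ + a₃ * vbar)) ∧
    J.det = (a₃ + a₁ + a₂ + 2 * a₃ * vbar) * (vbar * (1 + vbar)) ∧
    0 < J.det ∧
    (N = 1 + a₁ / (a₁ + a₂ + a₃ * vbar) →
      ∀ μ : ℂ, μ ∈ spectrum ℂ (J.map (Complex.ofReal ·)) →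
        μ.re = 0 ∧ μ ≠ 0) := by
  intro J
  have hs : 0 < a₁ + a₂ + a₃ * vbar := by positivity
  have htr : J.trace = (1 + vbar) * ((a₁ + a₂ + a₃ * vbar) * (N - 1) - a₁) := by
    simp only [J, Matrix.trace_fin_two_of, heq]
    ring
  have hdet : J.det = (a₃ + a₁ + a₂ + 2 * a₃ * vbar) * (vbar * (1 + vbar)) := by
    simp only [J, Matrix.det_fin_two_of]
    ring
  have hdet_pos : 0 < J.det := hdet ▸ by positivity
  have htr_iff : J.trace = 0 ↔ N = 1 + a₁ / (a₁ + a₂ + a₃ * vbar) := by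
    rw [htr, mul_eq_zero, or_iff_right (by positivity), sub_eq_zero, mul_comm,
      ← eq_div_iff hs.ne', sub_eq_iff_eq_add']
  exact ⟨htr_iff, hdet, hdet_pos, fun hN _ =>
    Matrix.re_eq_zero_and_ne_zero_of_mem_spectrum_map_ofReal (htr_iff.mpr hN) hdet_pos⟩

theorem stmt_16 (a₀ a₁ a₂ a₃ vbar N : ℝ) (h₀ : 0 < a₀) (h₁ : 0 < a₁)
    (h₂ : 0 < a₂) (h₃ : 0 < a₃) (hvbar : 0 < vbar)
    (heq : a₀ = (a₁ + a₂ + a₃ * vbar) * (1 + vbar)) :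
    let J : Matrix (Fin 2) (Fin 2) ℝ :=
      !![N * a₀ - (1 + vbar) * (2 * a₁ + a₂ + a₃ * vbar),
         -a₃ - (a₁ + a₂) - 2 * a₃ * vbar;
         vbar * (1 + vbar), 0]
    (J.trace = 0 ↔ N = 1 + a₁ / (a₁ + a₂ + a₃ * vbar)) ∧
    J.det = (a₃ + a₁ + a₂ + 2 * a₃ * vbar) * (vbar * (1 + vbar)) ∧
    0 < J.det ∧
    (N = 1 + a₁ / (a₁ + a₂ + a₃ * vbar) →
      ∀ μ : ℂ, μ ∈ spectrum ℂ (J.map (Complex.ofReal ·)) →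
        μ.re = 0 ∧ μ ≠ 0) :=
  stmt_16_general a₀ a₁ a₂ a₃ vbar N h₁ h₂ h₃ hvbar heq
end
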